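/- arXiv:1610.09238 — 4 statements merged into one kernel-verified Lean document; each statement's English description precedes it below -/
import Mathlib

section
/- Let k ≥ 2 and m = ℓk with ℓ ≤ −2 an integer, and let s ∈ ℂ. Set a(z) = (z^ℓ + s/z)^k (as a formal Laurent series in z). Then for every integer j ≤ 0 and b = z^j, the Laurent series a′b + k a b′ has lowest-order term k(ℓ + j) z^{m + j − 1}; consequently the map b ↦ a′b + kab′ from ℂ[z^{−1}] (Laurent polynomials in z^{−1}) to ℂ((z))/z^m ℂ[[z]] is surjective onto the polar parts of order more negative than any fixed bound, i.e., the induced map ℂ((z))/zℂ[z] → ℂ((z))/z^m ℂ[z] is surjective. -/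
/-!
For `b = z^j` the `t`-th binomial term of `a'b + kab'` sits in degree `ℓk + j - 1 - (ℓ + 1)t`,
so for `ℓ ≤ -2` the term `t = 0`, with coefficient `k(ℓ + j)`, is strictly the lowest. The
images of the monomials `z^j`, `j ≤ 0`, are therefore triangular with nonzero diagonal with
respect to the degree, and any polar part below `z^{ℓk}` is matched by eliminating its
coefficients from the lowest degree upwards.
-/

open Finset

/-- Coefficient at `z^n` of `a'b + k a b'`, where `a(z) = (z^ℓ + s z^{-1})^k` (expanded by the
binomial theorem) and `b` is the Laurent polynomial with coefficients given by the finitely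
supported function `b : ℤ →₀ ℂ`. Indeed for `b = z^j`,
`a'b + kab' = ∑_t C(k,t) s^t (ℓ(k-t) - t + kj) z^{ℓ(k-t) - t + j - 1}`. -/
noncomputable def coeffL (k : ℕ) (ℓ : ℤ) (s : ℂ) (b : ℤ →₀ ℂ) (n : ℤ) : ℂ :=
  ∑ j ∈ b.support, ∑ t ∈ Finset.range (k + 1),
    (Nat.choose k t : ℂ) * s ^ t *
      (((ℓ * ((k : ℤ) - (t : ℤ)) - (t : ℤ) + (k : ℤ) * j : ℤ) : ℂ)) *
      (if n = ℓ * ((k : ℤ) - (t : ℤ)) - (t : ℤ) + j - 1 then b j else 0)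

section Triangular

variable {K : Type*} [Field K] (v : ℤ → ℤ →₀ K) (c : ℤ)

theorem exists_linearCombination_eq_of_triangular
    (hlead : ∀ j ≤ 0, v j (c + j) ≠ 0) (hlow : ∀ j ≤ 0, ∀ n < c + j, v j n = 0)
    (g : ℤ →₀ K) :
    ∃ b : ℤ →₀ K, (∀ j ∈ b.support, j ≤ 0) ∧
      ∀ n ≤ c, Finsupp.linearCombination K v b n = g n := by
  suffices H : ∀ d ≤ c + 1, ∀ g : ℤ →₀ K, (∀ n < d, g n = 0) →
      ∃ b : ℤ →₀ K, (∀ j ∈ b.support, j ≤ 0) ∧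
        ∀ n ≤ c, Finsupp.linearCombination K v b n = g n by
    obtain ⟨m, hm⟩ := g.support.bddBelow
    refine H (min m (c + 1)) (min_le_right _ _) g fun n hn => ?_
    exact Finsupp.notMem_support_iff.mp fun hg => by have := hm hg; omega
  intro d hd
  induction d, hd using Int.leInductionDown with
  | base =>
    intro g hg
    exact ⟨0, by simp, fun n hn => by simp [hg n (by omega)]⟩
  | pred d hd ih =>
    intro g hg
    set j := d - 1 - c
    have hj : j ≤ 0 := by omega
    have hpos : c + j = d - 1 := by omega
    set a := g (d - 1) / v j (d - 1)
    obtain ⟨b, hb, hbg⟩ := ih (g - a • v j) fun n hn => by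
      rcases lt_or_eq_of_le (Int.le_sub_one_of_lt hn) with hn | rfl
      · simp [hg n hn, hlow j hj n (by omega)]
      · have := hpos ▸ hlead j hj
        simp [a, div_mul_cancel₀ _ this]
    refine ⟨b + Finsupp.single j a, fun i hi => ?_, fun n hn => ?_⟩
    · rcases mem_union.mp (Finsupp.support_add hi) with hi | hi
      · exact hb i hi
      · exact mem_singleton.mp (Finsupp.support_single_subset hi) ▸ hj
    · simp [hbg n hn]

end Triangular

/-- The Laurent polynomial `a'b + kab'` for `a = (z^ℓ + s/z)^k` and `b = z^j`. -/
noncomputable def derivTwistMonomial (k : ℕ) (ℓ : ℤ) (s : ℂ) (j : ℤ) : ℤ →₀ ℂ :=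
  ∑ t ∈ range (k + 1),
    Finsupp.single (ℓ * ((k : ℤ) - (t : ℤ)) - (t : ℤ) + j - 1)
      ((Nat.choose k t : ℂ) * s ^ t *
        (((ℓ * ((k : ℤ) - (t : ℤ)) - (t : ℤ) + (k : ℤ) * j : ℤ) : ℂ)))

theorem derivTwistMonomial_apply (k : ℕ) (ℓ : ℤ) (s : ℂ) (j n : ℤ) :
    derivTwistMonomial k ℓ s j n =
      ∑ t ∈ range (k + 1),
        if n = ℓ * ((k : ℤ) - (t : ℤ)) - (t : ℤ) + j - 1 then
          (Nat.choose k t : ℂ) * s ^ t *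
            (((ℓ * ((k : ℤ) - (t : ℤ)) - (t : ℤ) + (k : ℤ) * j : ℤ) : ℂ))
        else 0 := by
  simp only [derivTwistMonomial, Finsupp.finsetSum_apply, Finsupp.single_apply, eq_comm]

theorem coeffL_eq_linearCombination (k : ℕ) (ℓ : ℤ) (s : ℂ) (b : ℤ →₀ ℂ) (n : ℤ) :
    coeffL k ℓ s b n = Finsupp.linearCombination ℂ (derivTwistMonomial k ℓ s) b n := by
  simp only [coeffL, Finsupp.linearCombination_apply, Finsupp.sum, Finsupp.finsetSum_apply,
    Finsupp.smul_apply, derivTwistMonomial_apply, smul_eq_mul, mul_sum]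
  refine sum_congr rfl fun j _ => sum_congr rfl fun t _ => ?_
  split_ifs <;> ring

theorem coeffL_single_one (k : ℕ) (ℓ : ℤ) (s : ℂ) (j n : ℤ) :
    coeffL k ℓ s (Finsupp.single j 1) n = derivTwistMonomial k ℓ s j n := by
  rw [coeffL_eq_linearCombination, Finsupp.linearCombination_single, one_smul]

theorem derivTwistMonomial_apply_lead (k : ℕ) {ℓ : ℤ} (hℓ : ℓ ≠ -1) (s : ℂ) (j : ℤ) :
    derivTwistMonomial k ℓ s j (ℓ * k + j - 1) = k * (ℓ + j) := by
  rw [derivTwistMonomial_apply, sum_eq_single_of_mem 0 (mem_range.mpr k.succ_pos)]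
  · simp only [CharP.cast_eq_zero, sub_zero, if_pos, Nat.choose_zero_right]
    push_cast
    ring
  · intro t _ ht
    -- the `t`-th exponent is `ℓk + j - 1 - (ℓ + 1) t`
    rw [if_neg]
    intro h
    rcases mul_eq_zero.mp (by linarith : (ℓ + 1) * (t : ℤ) = 0) with h | h <;> omega

theorem derivTwistMonomial_apply_of_lt (k : ℕ) {ℓ : ℤ} (hℓ : ℓ ≤ -1) (s : ℂ) {j n : ℤ}
    (hn : n < ℓ * k + j - 1) : derivTwistMonomial k ℓ s j n = 0 := by
  rw [derivTwistMonomial_apply]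
  refine sum_eq_zero fun t _ => if_neg fun h => ?_
  nlinarith [Int.natCast_nonneg t]

/-- For `k ≥ 2`, `m = ℓk` with `ℓ ≤ -2`, `a(z) = (z^ℓ + s/z)^k`: for every `j ≤ 0` and
`b = z^j`, the series `a'b + kab'` has lowest-order term `k(ℓ+j) z^{m+j-1}`; consequently the
induced map `ℂ((z))/zℂ[z] → ℂ((z))/z^m ℂ[z]`, `b ↦ a'b + kab'`, is surjective. -/
theorem stmt9 (k : ℕ) (hk : 2 ≤ k) (ℓ : ℤ) (hℓ : ℓ ≤ -2) (s : ℂ) :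
    (∀ j : ℤ, j ≤ 0 →
      coeffL k ℓ s (Finsupp.single j 1) (ℓ * k + j - 1) = (k : ℂ) * ((ℓ : ℂ) + (j : ℂ)) ∧
      ∀ n : ℤ, n < ℓ * k + j - 1 → coeffL k ℓ s (Finsupp.single j 1) n = 0) ∧
    (∀ g : ℤ →₀ ℂ, (∀ n ∈ g.support, n < ℓ * k) →
      ∃ b : ℤ →₀ ℂ, (∀ j ∈ b.support, j ≤ 0) ∧
        ∀ n : ℤ, n < ℓ * k → coeffL k ℓ s b n = g n) := by
  have lead (j : ℤ) := derivTwistMonomial_apply_lead k (by omega : ℓ ≠ -1) s j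
  have low (j : ℤ) {n : ℤ} (hn : n < ℓ * k + j - 1) :=
    derivTwistMonomial_apply_of_lt k (by omega : ℓ ≤ -1) s hn
  have lead_ne_zero (j : ℤ) (hj : j ≤ 0) : derivTwistMonomial k ℓ s j (ℓ * k - 1 + j) ≠ 0 := by
    rw [sub_add_eq_add_sub, lead]
    exact mul_ne_zero (mod_cast (by omega : k ≠ 0)) (mod_cast (by omega : ℓ + j ≠ 0))
  refine ⟨fun j _ => ⟨?_, fun n hn => ?_⟩, fun g _ => ?_⟩
  · rw [coeffL_single_one, lead]
  · rw [coeffL_single_one, low j hn]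
  obtain ⟨b, hb, hbg⟩ := exists_linearCombination_eq_of_triangular (derivTwistMonomial k ℓ s)
    (ℓ * k - 1) lead_ne_zero (fun j _ n hn => low j (by omega)) g
  exact ⟨b, hb, fun n hn => by rw [coeffL_eq_linearCombination, hbg n (by omega)]⟩
end

section
/- Let k ≥ 1, m ∈ ℤ with m > −k or k ∤ m, and let ξ = w^m(a_0 + a_1 w + ⋯)(dw)^k be a k-differential germ at 0 with a_0 ≠ 0 (convergent power series). Then there exists a germ of biholomorphism φ fixing 0 such that φ*(ξ) = z^m (dz)^k, and the germ of φ is unique up to multiplication by an (m+k)-th root of unity. -/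
open Topology Filter
open scoped ENNReal

/-!
Write `ξ = w^m Q(w)^k (dw)^k` and look for the inverse of the coordinate change in the form
`T(z) = z E(z)^k`. A direct computation gives `(m+k)^k T^*(z^m (dz)^k) = z^m (L W)^k (dz)^k`,
where `W = E^(m+k)` and `L = (m+k) + k z d/dz`. The operator `L` multiplies the `j`-th Taylor
coefficient by `m + k + k j`, which never vanishes under the hypothesis on `m`, so `L` is a
bijection of convergent power series. Solving `L W = (m+k) Q` therefore gives `T` with
`T^*(z^m (dz)^k) = ξ`, and `φ = T⁻¹` works. Conversely, if `ψ = φ₂⁻¹ ∘ φ₁` fixes `z^m (dz)^k`,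
write `ψ = z E^k`: then `(L W)^k` is constant, hence so are `L W`, `W`, and `ψ / z`.
-/

theorem AnalyticAt.exists_zpow_eq {g : ℂ → ℂ} {x : ℂ} (hg : AnalyticAt ℂ g x) (hgx : g x ≠ 0)
    {n : ℤ} (hn : n ≠ 0) :
    ∃ E : ℂ → ℂ, AnalyticAt ℂ E x ∧ (∀ z, E z ≠ 0) ∧ ∀ᶠ z in 𝓝 x, E z ^ n = g z := by
  have hn' : (n : ℂ) ≠ 0 := Int.cast_ne_zero.mpr hn
  refine ⟨fun z => Complex.exp ((Complex.log (g x) + Complex.log (g z / g x)) / n), ?_,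
    fun z => Complex.exp_ne_zero _, ?_⟩
  · refine analyticAt_cexp.comp ((analyticAt_const.add ((analyticAt_clog ?_).comp
      (hg.div analyticAt_const hgx))).div analyticAt_const hn')
    simp [div_self hgx, Complex.one_mem_slitPlane]
  · filter_upwards [hg.continuousAt.eventually_ne hgx] with z hz
    rw [← Complex.exp_int_mul, mul_div_cancel₀ _ hn', Complex.exp_add, Complex.exp_log hgx,
      Complex.exp_log (div_ne_zero hz hgx), mul_div_cancel₀ _ hgx]

theorem AnalyticAt.exists_rightInverse {𝕜 : Type*} [NontriviallyNormedField 𝕜] [CompleteSpace 𝕜]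
    [CharZero 𝕜] {f : 𝕜 → 𝕜} {x : 𝕜} (hf : AnalyticAt 𝕜 f x) (hf' : deriv f x ≠ 0) :
    ∃ g : 𝕜 → 𝕜, AnalyticAt 𝕜 g (f x) ∧ g (f x) = x ∧ deriv g (f x) ≠ 0 ∧
      ∀ᶠ y in 𝓝 (f x), f (g y) = y :=
  ⟨_, hf.analyticAt_localInverse hf', HasStrictFDerivAt.localInverse_apply_image ..,
    by rw [(hf.hasStrictDerivAt.to_localInverse hf').hasDerivAt.deriv]; exact inv_ne_zero hf',
    HasStrictDerivAt.eventually_right_inverse ..⟩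

theorem eventually_eq_of_pow_eventually_eq {X 𝕜 : Type*} [TopologicalSpace X] [NormedField 𝕜]
    [CharZero 𝕜] {f : X → 𝕜} {x : X} {k : ℕ} (hk : k ≠ 0) (hf : ContinuousAt f x)
    (hfx : f x ≠ 0) (h : ∀ᶠ y in 𝓝 x, f y ^ k = f x ^ k) : ∀ᶠ y in 𝓝 x, f y = f x := by
  set S : X → 𝕜 := fun y => ∑ i ∈ Finset.range k, f y ^ i * f x ^ (k - 1 - i)
  have hS : ContinuousAt S x := by fun_prop
  -- `S y * (f y - f x) = f y ^ k - f x ^ k`, and `S x = k * f x ^ (k - 1)`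
  have hSx : S x ≠ 0 := by
    have : S x = k * f x ^ (k - 1) := by
      simp only [S, ← pow_add]
      rw [Finset.sum_congr rfl fun i hi => by rw [Nat.add_sub_cancel' (by simp at hi; omega)]]
      simp
    rw [this]
    exact mul_ne_zero (Nat.cast_ne_zero.mpr hk) (pow_ne_zero _ hfx)
  filter_upwards [h, hS.eventually_ne hSx] with y hy hSy
  have := geom_sum₂_mul (f y) (f x) k
  rw [hy, sub_self, mul_eq_zero] at this
  exact sub_eq_zero.mp (this.resolve_left hSy)

theorem eventually_eq_of_zpow_eventually_eq {X 𝕜 : Type*} [TopologicalSpace X] [NormedField 𝕜]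
    [CharZero 𝕜] {f : X → 𝕜} {x : X} {n : ℤ} (hn : n ≠ 0) (hf : ContinuousAt f x)
    (hfx : f x ≠ 0) (h : ∀ᶠ y in 𝓝 x, f y ^ n = f x ^ n) : ∀ᶠ y in 𝓝 x, f y = f x := by
  refine eventually_eq_of_pow_eventually_eq (Int.natAbs_ne_zero.mpr hn) hf hfx ?_
  filter_upwards [h] with y hy
  rcases Int.natAbs_eq n with hn' | hn'
  · rwa [hn', zpow_natCast, zpow_natCast] at hy
  · rwa [hn', zpow_neg, zpow_neg, inv_inj, zpow_natCast, zpow_natCast] at hy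

noncomputable def eulerOp (a b : ℂ) (W : ℂ → ℂ) (z : ℂ) : ℂ := a * W z + b * (z * deriv W z)

theorem analyticAt_eulerOp {f : ℂ → ℂ} {x : ℂ} (hf : AnalyticAt ℂ f x) (a b : ℂ) :
    AnalyticAt ℂ (eulerOp a b f) x := by
  unfold eulerOp
  fun_prop

theorem HasFPowerSeriesOnBall.hasSum_eulerOp {f : ℂ → ℂ} {p : FormalMultilinearSeries ℂ ℂ ℂ}
    {r : ℝ≥0∞} (hf : HasFPowerSeriesOnBall f p 0 r) (a b : ℂ) {z : ℂ}
    (hz : z ∈ Metric.eball 0 r) :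
    HasSum (fun j => (a + b * j) * p j (fun _ => z)) (eulerOp a b f z) := by
  unfold eulerOp
  have hf₀ : HasSum (fun j => p j fun _ => z) (f z) := by simpa using hf.hasSum hz
  have hf₁ : HasSum (fun j => p.derivSeries j (fun _ => z) z) (z * deriv f z) := by
    have := (hf.fderiv.hasSum hz).mapL (ContinuousLinearMap.apply ℂ ℂ z)
    simpa [← toSpanSingleton_deriv, mul_comm] using this
  have hf₂ : HasSum (fun j : ℕ => (j : ℂ) * p j fun _ => z) (z * deriv f z) := by
    rw [← hasSum_nat_add_iff' 1]
    simp only [FormalMultilinearSeries.derivSeries_apply_diag] at hf₁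
    simpa using hf₁
  simpa only [add_mul, mul_assoc] using (hf₀.mul_left a).add (hf₂.mul_left b)

theorem exists_analyticAt_eulerOp_eq {n : ℤ} {k : ℕ} (hres : ∀ j : ℕ, n + k * j ≠ 0)
    {F : ℂ → ℂ} (hF : AnalyticAt ℂ F 0) :
    ∃ W : ℂ → ℂ, AnalyticAt ℂ W 0 ∧ ∀ᶠ z in 𝓝 0, eulerOp n k W z = F z := by
  obtain ⟨p, r, hp⟩ := hF
  have hres' : ∀ j : ℕ, 1 ≤ ‖(n + k * j : ℂ)‖ := fun j => by
    exact_mod_cast Int.one_le_abs (hres j)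
  let P : FormalMultilinearSeries ℂ ℂ ℂ := fun j => (n + k * j : ℂ)⁻¹ • p j
  have hPp : p.radius ≤ P.radius := FormalMultilinearSeries.radius_le_of_le fun j => by
    simpa [P, norm_smul] using
      mul_le_of_le_one_left (norm_nonneg (p j)) (inv_le_one_of_one_le₀ (hres' j))
  have hP := P.hasFPowerSeriesOnBall (hp.radius_pos.trans_le hPp)
  refine ⟨P.sum, hP.analyticAt, ?_⟩
  filter_upwards [Metric.eball_mem_nhds (0 : ℂ) (lt_min hp.r_pos hP.r_pos)] with z hz
  have hP' := hP.hasSum_eulerOp n k (Metric.eball_subset_eball (min_le_right _ _) hz)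
  have hp' := hp.hasSum (Metric.eball_subset_eball (min_le_left _ _) hz)
  have hne : ∀ j : ℕ, (n + k * j : ℂ) ≠ 0 := fun j => by exact_mod_cast hres j
  simp only [P, smul_apply, smul_eq_mul, ← mul_assoc,
    mul_inv_cancel₀ (hne _), one_mul] at hP'
  rw [zero_add] at hp'
  exact hP'.unique hp'

theorem eventuallyEq_zero_of_eulerOp_eq_zero {a b : ℂ} (hres : ∀ j : ℕ, a + b * j ≠ 0)
    {f : ℂ → ℂ} (hf : AnalyticAt ℂ f 0) (hode : ∀ᶠ z in 𝓝 0, eulerOp a b f z = 0) :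
    f =ᶠ[𝓝 0] 0 := by
  refine analyticOrderAt_eq_top.mp (by_contra fun hne => ?_)
  obtain ⟨d, hd⟩ := ENat.ne_top_iff_exists.mp hne
  obtain ⟨w, hw, hw0, hfw⟩ := hf.analyticOrderAt_eq_natCast.mp hd.symm
  have hfactor : ∀ᶠ z in 𝓝 0, eulerOp a b f z = z ^ d * eulerOp (a + b * d) b w z := by
    filter_upwards [hfw.eventually_nhds, hw.eventually_analyticAt] with z hz hwz
    have hderiv : HasDerivAt f (d * z ^ (d - 1) * w z + z ^ d * deriv w z) z := by
      refine ((hasDerivAt_pow d z).mul hwz.differentiableAt.hasDerivAt).congr_of_eventuallyEq ?_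
      filter_upwards [hz] with y hy
      simpa using hy
    have hzd : z * (d * z ^ (d - 1)) = d * z ^ d := by
      rcases d with _ | d
      · simp
      · simp [pow_succ]; ring
    simp only [eulerOp, hderiv.deriv, hz.self_of_nhds, smul_eq_mul]
    linear_combination b * w z * hzd
  have hw_euler : ∀ᶠ z in 𝓝 0, eulerOp (a + b * d) b w z = 0 := by
    refine (analyticAt_eulerOp hw _ _).frequently_zero_iff_eventually_zero.mp
      (Eventually.frequently ?_)
    filter_upwards [(hode.and hfactor).filter_mono nhdsWithin_le_nhds, self_mem_nhdsWithin]
      with z ⟨h0, hfz⟩ hz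
    rw [hfz] at h0
    exact (mul_eq_zero.mp h0).resolve_left (pow_ne_zero _ hz)
  have := hw_euler.self_of_nhds
  simp only [eulerOp, zero_mul, mul_zero, add_zero] at this
  exact hw0 ((mul_eq_zero.mp this).resolve_left (hres d))

theorem eventuallyEq_const_of_eulerOp_pow_eq {a b : ℂ} (hres : ∀ j : ℕ, a + b * j ≠ 0) {k : ℕ}
    (hk : k ≠ 0) {W : ℂ → ℂ} (hW : AnalyticAt ℂ W 0)
    (hpow : ∀ᶠ u in 𝓝[≠] 0, eulerOp a b W u ^ k = a ^ k) :
    W 0 ^ k = 1 ∧ W =ᶠ[𝓝 0] fun _ => W 0 := by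
  have ha : a ≠ 0 := by simpa using hres 0
  have hV := analyticAt_eulerOp hW a b
  have hpow' : ∀ᶠ u in 𝓝 0, eulerOp a b W u ^ k = a ^ k :=
    (hV.pow k).frequently_eq_iff_eventually_eq analyticAt_const |>.mp hpow.frequently
  have hV0 : eulerOp a b W 0 = a * W 0 := by simp [eulerOp]
  have hW0 : W 0 ^ k = 1 := by
    have := hpow'.self_of_nhds
    rwa [hV0, mul_pow, mul_eq_left₀ (pow_ne_zero k ha)] at this
  refine ⟨hW0, ?_⟩
  have hVconst : ∀ᶠ u in 𝓝 0, eulerOp a b W u = eulerOp a b W 0 := by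
    refine eventually_eq_of_pow_eventually_eq hk hV.continuousAt ?_ ?_
    · rw [hV0]
      refine mul_ne_zero ha fun h => ?_
      simp [h, zero_pow hk] at hW0
    · simpa only [hV0, mul_pow, hW0, mul_one] using hpow'
  have hsub : (fun u => W u - W 0) =ᶠ[𝓝 0] 0 :=
    eventuallyEq_zero_of_eulerOp_eq_zero hres (hW.fun_sub analyticAt_const) <| by
      filter_upwards [hVconst] with u hu
      rw [hV0] at hu
      simp only [eulerOp, deriv_sub_const] at hu ⊢
      linear_combination hu
  filter_upwards [hsub] with u hu
  exact sub_eq_zero.mp hu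

theorem pullback_comp (k : ℕ) (f : ℂ → ℂ) {θ ψ φ : ℂ → ℂ} {u : ℂ}
    (hθ : DifferentiableAt ℂ θ (ψ u)) (hψ : DifferentiableAt ℂ ψ u) (hφ : θ ∘ ψ =ᶠ[𝓝 u] φ) :
    f (φ u) * deriv φ u ^ k = f (θ (ψ u)) * deriv θ (ψ u) ^ k * deriv ψ u ^ k := by
  rw [← hφ.deriv_eq, ← hφ.eq_of_nhds, deriv_comp u hθ hψ, mul_pow, mul_assoc]
  rfl

theorem pullback_mul_pow_eq_eulerOp {k : ℕ} (hk : k ≠ 0) (m : ℤ) {E : ℂ → ℂ} {z : ℂ}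
    (hE : DifferentiableAt ℂ E z) (hEz : E z ≠ 0) :
    ((m + k : ℤ) : ℂ) ^ k * ((z * E z ^ k) ^ m * deriv (fun w => w * E w ^ k) z ^ k) =
      z ^ m * eulerOp (m + k : ℤ) k (fun w => E w ^ (m + k)) z ^ k := by
  set n : ℤ := m + k
  set e := E z
  set e' := deriv E z
  have hT : deriv (fun w => w * E w ^ k) z = e ^ ((k : ℤ) - 1) * (e + k * z * e') := by
    have hd : HasDerivAt (fun w => w * E w ^ k) (1 * e ^ k + z * (k * e ^ (k - 1) * e')) z :=
      (hasDerivAt_id' z).mul (hE.hasDerivAt.pow k)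
    rw [hd.deriv]
    obtain ⟨j, rfl⟩ := Nat.exists_eq_add_one_of_ne_zero hk
    simp only [Nat.cast_add, Nat.cast_one, add_sub_cancel_right, zpow_natCast, pow_succ,
      add_tsub_cancel_right]
    ring
  have hW : eulerOp n k (fun w => E w ^ n) z = n * e ^ (n - 1) * (e + k * z * e') := by
    have hd : HasDerivAt (fun w => E w ^ n) (n * e ^ (n - 1) * e') z :=
      (hasDerivAt_zpow n e (Or.inl hEz)).comp z hE.hasDerivAt
    have he : e ^ n = e ^ (n - 1) * e := by rw [← zpow_add_one₀ hEz, sub_add_cancel]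
    rw [eulerOp, hd.deriv, he]
    ring
  have hexp : e ^ ((n - 1) * k) = e ^ (k * m) * e ^ (((k : ℤ) - 1) * k) := by
    rw [← zpow_add₀ hEz]
    congr 1
    ring
  rw [hT, hW, mul_zpow, mul_pow, mul_pow, mul_pow, ← zpow_natCast e k, ← zpow_mul,
    ← zpow_natCast (e ^ ((k : ℤ) - 1)) k, ← zpow_mul, ← zpow_natCast (e ^ (n - 1)), ← zpow_mul,
    hexp]
  ring

theorem eventuallyEq_const_mul_of_pullback_eq {k : ℕ} (hk : k ≠ 0) {m : ℤ}
    (hres : ∀ j : ℕ, m + k + k * j ≠ 0) {ψ : ℂ → ℂ} (hψ : AnalyticAt ℂ ψ 0) (hψ0 : ψ 0 = 0)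
    (hψ' : deriv ψ 0 ≠ 0) (hpull : ∀ᶠ u in 𝓝[≠] 0, ψ u ^ m * deriv ψ u ^ k = u ^ m) :
    deriv ψ 0 ^ (m + k) = 1 ∧ ψ =ᶠ[𝓝 0] fun u => deriv ψ 0 * u := by
  set n : ℤ := m + k
  have hn : n ≠ 0 := by simpa using hres 0
  set g := dslope ψ 0
  have hg : AnalyticAt ℂ g 0 := by
    obtain ⟨p, hp⟩ := hψ
    exact hp.has_fpower_series_dslope_fslope.analyticAt
  have hψg (u : ℂ) : ψ u = u * g u := by
    simpa [hψ0] using (sub_smul_dslope ψ 0 u).symm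
  have hg0 : g 0 = deriv ψ 0 := dslope_same ψ 0
  obtain ⟨E, hE, hEne, hEg⟩ := hg.exists_zpow_eq (hg0 ▸ hψ') (Int.natCast_ne_zero.mpr hk)
  set W := fun u => E u ^ n
  have hW : AnalyticAt ℂ W 0 := hE.zpow (hEne 0)
  have hψE : ψ =ᶠ[𝓝 0] fun u => u * E u ^ k := by
    filter_upwards [hEg] with u hu
    rw [hψg, ← hu, zpow_natCast]
  have hpowW : ∀ᶠ u in 𝓝[≠] 0, eulerOp n k W u ^ k = (n : ℂ) ^ k := by
    filter_upwards [hpull, (hψE.eventuallyEq_nhds.and hE.eventually_analyticAt).filter_mono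
      nhdsWithin_le_nhds, self_mem_nhdsWithin] with u hu ⟨hψEu, hEu⟩ hu0
    have key := pullback_mul_pow_eq_eulerOp hk m hEu.differentiableAt (hEne u)
    rw [← hψEu.eq_of_nhds, ← hψEu.deriv_eq, hu] at key
    exact mul_left_cancel₀ (zpow_ne_zero m hu0) (key.symm.trans (mul_comm _ _))
  obtain ⟨hW0, hWconst⟩ :=
    eventuallyEq_const_of_eulerOp_pow_eq (by exact_mod_cast hres) hk hW hpowW
  have hgW : ∀ᶠ u in 𝓝 0, g u ^ n = W u ^ k := by
    filter_upwards [hEg] with u hu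
    rw [← hu, ← zpow_mul, ← zpow_natCast, ← zpow_mul, mul_comm]
  have hε : g 0 ^ n = 1 := by rw [hgW.self_of_nhds, hW0]
  have hgconst : ∀ᶠ u in 𝓝 0, g u = g 0 := by
    refine eventually_eq_of_zpow_eventually_eq hn hg.continuousAt (hg0 ▸ hψ') ?_
    filter_upwards [hgW, hWconst] with u hu hWu
    rw [hu, hWu, hW0, hε]
  refine ⟨hg0 ▸ hε, ?_⟩
  filter_upwards [hgconst] with u hu
  rw [hψg, hu, hg0, mul_comm]

def IsStandardCoordinate (k : ℕ) (m : ℤ) (h φ : ℂ → ℂ) : Prop :=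
  AnalyticAt ℂ φ 0 ∧ φ 0 = 0 ∧ deriv φ 0 ≠ 0 ∧
    ∀ᶠ u in 𝓝[≠] (0 : ℂ), (φ u) ^ m * h (φ u) * (deriv φ u) ^ k = u ^ m

theorem exists_isStandardCoordinate {k : ℕ} (hk : k ≠ 0) {m : ℤ}
    (hres : ∀ j : ℕ, m + k + k * j ≠ 0) {h : ℂ → ℂ} (hh : AnalyticAt ℂ h 0) (h0 : h 0 ≠ 0) :
    ∃ φ, IsStandardCoordinate k m h φ := by
  set n : ℤ := m + k with hn_def
  have hn : n ≠ 0 := by simpa using hres 0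
  obtain ⟨Q, hQ, hQne, hQh⟩ := hh.exists_zpow_eq h0 (Int.natCast_ne_zero.mpr hk)
  obtain ⟨W, hW, hWQ⟩ := exists_analyticAt_eulerOp_eq hres
    (analyticAt_const.mul hQ : AnalyticAt ℂ (fun z => n * Q z) 0)
  have hW0 : W 0 ≠ 0 := by
    have := hWQ.self_of_nhds
    simp only [eulerOp, zero_mul, mul_zero, add_zero] at this
    rw [mul_left_cancel₀ (Int.cast_ne_zero.mpr hn) this]
    exact hQne 0
  obtain ⟨E, hE, hEne, hEW⟩ := hW.exists_zpow_eq hW0 hn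
  replace hEW : (fun z => E z ^ n) =ᶠ[𝓝 0] W := hEW
  set T := fun z => z * E z ^ k
  have hT : AnalyticAt ℂ T 0 := analyticAt_id.mul (hE.pow k)
  have hT0 : T 0 = 0 := zero_mul _
  have hT' : deriv T 0 ≠ 0 := by
    have hd : HasDerivAt T (1 * E 0 ^ k + 0 * (k * E 0 ^ (k - 1) * deriv E 0)) 0 :=
      (hasDerivAt_id' 0).mul (hE.differentiableAt.hasDerivAt.pow k)
    rw [hd.deriv]
    simpa using pow_ne_zero k (hEne 0)
  have hpull : ∀ᶠ z in 𝓝 0, T z ^ m * deriv T z ^ k = z ^ m * h z := by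
    filter_upwards [hE.eventually_analyticAt, hEW.eventuallyEq_nhds, hWQ, hQh]
      with z hEz hEWz hWQz hQhz
    have key := pullback_mul_pow_eq_eulerOp hk m hEz.differentiableAt (hEne z)
    have hV : eulerOp n k (fun w => E w ^ n) z = n * Q z := by
      rw [← Pi.mul_apply (fun _ => (n : ℂ)) Q, ← hWQz, eulerOp, eulerOp, hEWz.deriv_eq,
        hEWz.eq_of_nhds]
    rw [← hn_def, hV, mul_pow, ← zpow_natCast (Q z), hQhz] at key
    exact mul_left_cancel₀ (pow_ne_zero k (Int.cast_ne_zero.mpr hn))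
      (key.trans (mul_left_comm _ _ _))
  obtain ⟨φ, hφ, hφ0, hφ', hTφ⟩ := hT.exists_rightInverse hT'
  rw [hT0] at hφ hφ0 hφ' hTφ
  replace hTφ : T ∘ φ =ᶠ[𝓝 0] id := hTφ
  refine ⟨φ, hφ, hφ0, hφ', ?_⟩
  have hφtendsto : Tendsto φ (𝓝 0) (𝓝 0) := by simpa [hφ0] using hφ.continuousAt.tendsto
  filter_upwards [(hφtendsto.eventually (hpull.and hT.eventually_analyticAt)).filter_mono
    nhdsWithin_le_nhds, hφ.eventually_analyticAt.filter_mono nhdsWithin_le_nhds,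
    (hTφ.eventuallyEq_nhds).filter_mono nhdsWithin_le_nhds] with u ⟨hpullu, hTu⟩ hφu hTφu
  have := pullback_comp k (· ^ m) hTu.differentiableAt hφu.differentiableAt hTφu
  rw [id_eq, deriv_id, one_pow, mul_one, hpullu] at this
  simpa using this.symm

theorem IsStandardCoordinate.exists_eq_comp_const_mul {k : ℕ} (hk : k ≠ 0) {m : ℤ}
    (hres : ∀ j : ℕ, m + k + k * j ≠ 0) {h φ₁ φ₂ : ℂ → ℂ} (h₁ : IsStandardCoordinate k m h φ₁)
    (h₂ : IsStandardCoordinate k m h φ₂) :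
    ∃ ε : ℂ, ε ^ (m + k) = 1 ∧ ∀ᶠ u in 𝓝 0, φ₁ u = φ₂ (ε * u) := by
  obtain ⟨hφ₁, hφ₁0, hφ₁', hpull₁⟩ := h₁
  obtain ⟨hφ₂, hφ₂0, hφ₂', hpull₂⟩ := h₂
  obtain ⟨χ, hχ, hχ0, -, hφ₂χ⟩ := hφ₂.exists_rightInverse hφ₂'
  rw [hφ₂0] at hχ hχ0 hφ₂χ
  set ψ := χ ∘ φ₁
  have hφ₁tendsto : Tendsto φ₁ (𝓝 0) (𝓝 0) := by simpa [hφ₁0] using hφ₁.continuousAt.tendsto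
  have hψ : AnalyticAt ℂ ψ 0 := (hφ₁0 ▸ hχ).comp hφ₁
  have hψ0 : ψ 0 = 0 := by simp [ψ, hφ₁0, hχ0]
  have hφ₂ψ : φ₂ ∘ ψ =ᶠ[𝓝 0] φ₁ := hφ₁tendsto.eventually hφ₂χ
  have hψ' : deriv ψ 0 ≠ 0 := by
    have := deriv_comp (h₂ := φ₂) 0 (by rw [hψ0]; exact hφ₂.differentiableAt)
      hψ.differentiableAt
    rw [hφ₂ψ.deriv_eq] at this
    exact right_ne_zero_of_mul (this ▸ hφ₁')
  have hψtendsto : Tendsto ψ (𝓝 0) (𝓝 0) := by simpa [hψ0] using hψ.continuousAt.tendsto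
  have hψpunctured : Tendsto ψ (𝓝[≠] 0) (𝓝[≠] 0) := by
    simpa [hψ0] using hψ.differentiableAt.hasDerivAt.tendsto_nhdsNE hψ'
  have hpullψ : ∀ᶠ u in 𝓝[≠] 0, ψ u ^ m * deriv ψ u ^ k = u ^ m := by
    filter_upwards [hpull₁, hψpunctured.eventually hpull₂,
      ((hψtendsto.eventually hφ₂.eventually_analyticAt).and
        (hψ.eventually_analyticAt.and hφ₂ψ.eventuallyEq_nhds)).filter_mono nhdsWithin_le_nhds]
      with u hpull₁u hpull₂u ⟨hφ₂u, hψu, hφ₂ψu⟩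
    have := pullback_comp k (fun w => w ^ m * h w) hφ₂u.differentiableAt hψu.differentiableAt
      hφ₂ψu
    rwa [hpull₁u, hpull₂u, eq_comm] at this
  obtain ⟨hε, hψε⟩ := eventuallyEq_const_mul_of_pullback_eq hk hres hψ hψ0 hψ' hpullψ
  refine ⟨deriv ψ 0, hε, ?_⟩
  filter_upwards [hφ₂ψ, hψε] with u h1 h2
  rw [← h1, Function.comp_apply, h2]

/-- Standard coordinates for a `k`-differential germ `ξ = w^m h(w) (dw)^k` (with `h` analytic,
`h 0 = a₀ ≠ 0`) at a singularity of order `m` with `m > -k` or `k ∤ m`: there is a germ of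
biholomorphism `φ` fixing `0` with `φ^* ξ = z^m (dz)^k`, and `φ` is unique up to
multiplication by an `(m+k)`-th root of unity. -/
theorem stmt13 (k : ℕ) (hk : 1 ≤ k) (m : ℤ) (hm : -(k : ℤ) < m ∨ ¬ ((k : ℤ) ∣ m))
    (h : ℂ → ℂ) (hh : AnalyticAt ℂ h 0) (h0 : h 0 ≠ 0) :
    (∃ φ : ℂ → ℂ, AnalyticAt ℂ φ 0 ∧ φ 0 = 0 ∧ deriv φ 0 ≠ 0 ∧
      ∀ᶠ u in 𝓝[≠] (0 : ℂ), (φ u) ^ m * h (φ u) * (deriv φ u) ^ k = u ^ m) ∧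
    (∀ φ₁ φ₂ : ℂ → ℂ,
      (AnalyticAt ℂ φ₁ 0 ∧ φ₁ 0 = 0 ∧ deriv φ₁ 0 ≠ 0 ∧
        ∀ᶠ u in 𝓝[≠] (0 : ℂ), (φ₁ u) ^ m * h (φ₁ u) * (deriv φ₁ u) ^ k = u ^ m) →
      (AnalyticAt ℂ φ₂ 0 ∧ φ₂ 0 = 0 ∧ deriv φ₂ 0 ≠ 0 ∧
        ∀ᶠ u in 𝓝[≠] (0 : ℂ), (φ₂ u) ^ m * h (φ₂ u) * (deriv φ₂ u) ^ k = u ^ m) →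
      ∃ ε : ℂ, ε ^ (m + (k : ℤ)) = 1 ∧ ∀ᶠ u in 𝓝 (0 : ℂ), φ₁ u = φ₂ (ε * u)) := by
  have hk₀ : k ≠ 0 := Nat.one_le_iff_ne_zero.mp hk
  have hres : ∀ j : ℕ, m + k + k * j ≠ 0 := by
    intro j hj
    rcases hm with hm | hm
    · have : (0 : ℤ) ≤ k * j := by positivity
      linarith
    · exact hm ⟨-(1 + j), by linear_combination hj⟩
  exact ⟨exists_isStandardCoordinate hk₀ hres hh h0,
    fun _ _ h₁ h₂ => IsStandardCoordinate.exists_eq_comp_const_mul hk₀ hres h₁ h₂⟩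
end

section
/- Let k ≥ 1 and let ξ = w^{−k}(a_0 + a_1 w + ⋯)(dw)^k be a k-differential germ at 0 with a_0 ≠ 0 (convergent power series). Then there exists a germ of biholomorphism φ fixing 0 and a nonzero complex number r such that φ*(ξ) = (r/z^k)(dz)^k; the number r is uniquely determined by ξ (independent of φ). -/
open Topology Filter

/-! Write `h = h 0 * G ^ k` with `G` analytic and `G 0 = 1` (a branch of `(h / h 0) ^ (1 / k)`).
The coordinate `ψ w = w * exp (P w)` with `P' = (G - 1) / w` solves `w ψ' = G ψ`, hence
`h 0 * (w ψ') ^ k = h * ψ ^ k`: it pulls `(h 0 / z ^ k) (dz) ^ k` back to `ξ`, so its local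
inverse `φ` is the required chart, with `r = h 0`. Conversely, for any chart `φ` fixing `0`,
`u ^ k * φ^* ξ = h (φ u) * (u * φ' u / φ u) ^ k` tends to `h 0`, which forces `r = h 0`. -/

lemma AnalyticAt.exists_primitive {Q : ℂ → ℂ} {z₀ : ℂ} (hQ : AnalyticAt ℂ Q z₀) :
    ∃ P : ℂ → ℂ, AnalyticAt ℂ P z₀ ∧ ∀ᶠ z in 𝓝 z₀, HasDerivAt P (Q z) z := by
  obtain ⟨ε, hε, hQε⟩ := hQ.exists_ball_analyticOnNhd
  obtain ⟨P, hP⟩ := hQε.differentiableOn.isExactOn_ball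
  have hball : Metric.ball z₀ ε ∈ 𝓝 z₀ := Metric.ball_mem_nhds z₀ hε
  refine ⟨P, DifferentiableOn.analyticAt (fun z hz ↦ ?_) hball, eventually_of_mem hball hP⟩
  exact (hP z hz).differentiableAt.differentiableWithinAt

lemma AnalyticAt.exists_pow_eventuallyEq_of_eq_one {h : ℂ → ℂ} {z₀ : ℂ} {k : ℕ}
    (hh : AnalyticAt ℂ h z₀) (h1 : h z₀ = 1) (hk : k ≠ 0) :
    ∃ G : ℂ → ℂ, AnalyticAt ℂ G z₀ ∧ G z₀ = 1 ∧ ∀ᶠ z in 𝓝 z₀, G z ^ k = h z := by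
  have hkC : (k : ℂ) ≠ 0 := Nat.cast_ne_zero.mpr hk
  have hlog : AnalyticAt ℂ (fun z ↦ Complex.log (h z)) z₀ := hh.clog (by simp [h1])
  refine ⟨fun z ↦ Complex.exp (Complex.log (h z) / k), (hlog.div analyticAt_const hkC).cexp,
    by simp [h1], ?_⟩
  filter_upwards [hh.continuousAt.eventually_ne (h1 ▸ one_ne_zero)] with z hz
  rw [← Complex.exp_nat_mul, mul_div_cancel₀ _ hkC, Complex.exp_log hz]

lemma exists_mul_deriv_eq_mul_self {G : ℂ → ℂ} (hG : AnalyticAt ℂ G 0) (hG0 : G 0 = 1) :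
    ∃ ψ : ℂ → ℂ, AnalyticAt ℂ ψ 0 ∧ ψ 0 = 0 ∧ deriv ψ 0 ≠ 0 ∧
      ∀ᶠ w in 𝓝 0, w * deriv ψ w = G w * ψ w := by
  have hQ : AnalyticAt ℂ (dslope G 0) 0 := by
    obtain ⟨p, hp⟩ := hG
    exact ⟨p.fslope, hp.has_fpower_series_dslope_fslope⟩
  obtain ⟨P, hP, hPQ⟩ := hQ.exists_primitive
  have hψ' : ∀ᶠ w in 𝓝 0,
      HasDerivAt (fun w ↦ w * Complex.exp (P w)) (Complex.exp (P w) * G w) w := by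
    filter_upwards [hPQ] with w hw
    refine ((hasDerivAt_id' w).mul hw.cexp).congr_deriv ?_
    have hGw : w * dslope G 0 w = G w - 1 := by simpa [hG0] using sub_smul_dslope G 0 w
    linear_combination Complex.exp (P w) * hGw
  refine ⟨fun w ↦ w * Complex.exp (P w), analyticAt_id.mul hP.cexp, by simp, ?_, ?_⟩
  · rw [hψ'.self_of_nhds.deriv, hG0, mul_one]
    exact Complex.exp_ne_zero _
  · filter_upwards [hψ'] with w hw
    rw [hw.deriv]
    ring

lemma exists_pullback_normalForm_eq {h : ℂ → ℂ} {k : ℕ} (hk : k ≠ 0)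
    (hh : AnalyticAt ℂ h 0) (h0 : h 0 ≠ 0) :
    ∃ ψ : ℂ → ℂ, AnalyticAt ℂ ψ 0 ∧ ψ 0 = 0 ∧ deriv ψ 0 ≠ 0 ∧
      ∀ᶠ w in 𝓝 0, h 0 * (w * deriv ψ w) ^ k = h w * ψ w ^ k := by
  have hnormalized : AnalyticAt ℂ (fun z ↦ h z / h 0) 0 := hh.div analyticAt_const h0
  obtain ⟨G, hG, hG0, hGk⟩ := hnormalized.exists_pow_eventuallyEq_of_eq_one (div_self h0) hk
  obtain ⟨ψ, hψ, hψ0, hψ', hode⟩ := exists_mul_deriv_eq_mul_self hG hG0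
  refine ⟨ψ, hψ, hψ0, hψ', ?_⟩
  filter_upwards [hGk, hode] with w hGw hw
  rw [hw, mul_pow, hGw]
  field_simp

lemma exists_localInverse_pullback_eq {ψ h : ℂ → ℂ} {k : ℕ} {r : ℂ}
    (hψ : AnalyticAt ℂ ψ 0) (hψ0 : ψ 0 = 0) (hψ' : deriv ψ 0 ≠ 0)
    (hpull : ∀ᶠ w in 𝓝 0, r * (w * deriv ψ w) ^ k = h w * ψ w ^ k) :
    ∃ φ : ℂ → ℂ, AnalyticAt ℂ φ 0 ∧ φ 0 = 0 ∧ deriv φ 0 ≠ 0 ∧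
      ∀ᶠ u in 𝓝[≠] 0, h (φ u) / φ u ^ k * deriv φ u ^ k = r / u ^ k := by
  set φ := hψ.hasStrictDerivAt.localInverse _ _ _ hψ'
  have hφ : AnalyticAt ℂ φ 0 := hψ0 ▸ hψ.analyticAt_localInverse hψ'
  have hφ0 : φ 0 = 0 := by
    simpa only [hψ0] using HasStrictFDerivAt.localInverse_apply_image
      (hψ.hasStrictDerivAt.hasStrictFDerivAt_equiv hψ')
  have hφψ : ∀ᶠ u in 𝓝 0, ψ (φ u) = u := hψ0 ▸ HasStrictDerivAt.eventually_right_inverse ..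
  have hφ_tendsto : Tendsto φ (𝓝 0) (𝓝 0) := by simpa only [hφ0] using hφ.continuousAt.tendsto
  have hderiv : ∀ᶠ u in 𝓝 0, deriv ψ (φ u) * deriv φ u = 1 := by
    filter_upwards [hφ.eventually_analyticAt, hφ_tendsto.eventually hψ.eventually_analyticAt,
      hφψ.eventually_nhds] with u hφu hψu (hu : ψ ∘ φ =ᶠ[𝓝 u] id)
    rw [← deriv_comp u hψu.differentiableAt hφu.differentiableAt, hu.deriv_eq, deriv_id]
  refine ⟨φ, hφ, hφ0, right_ne_zero_of_mul_eq_one hderiv.self_of_nhds, ?_⟩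
  filter_upwards [eventually_nhdsWithin_of_eventually_nhds hφψ,
    eventually_nhdsWithin_of_eventually_nhds hderiv,
    eventually_nhdsWithin_of_eventually_nhds (hφ_tendsto.eventually hpull),
    self_mem_nhdsWithin] with u hu hdu hpu (hu0 : u ≠ 0)
  have hφu : φ u ≠ 0 := fun hφu ↦ hu0 (by rw [← hu, hφu, hψ0])
  rw [hu] at hpu
  have hdk : (deriv ψ (φ u) * deriv φ u) ^ k = 1 := by rw [hdu, one_pow]
  field_simp
  linear_combination -(deriv φ u) ^ k * hpu + r * φ u ^ k * hdk

lemma tendsto_pullback_mul_pow {h φ : ℂ → ℂ} (k : ℕ) (hh : ContinuousAt h 0)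
    (hφ : AnalyticAt ℂ φ 0) (hφ0 : φ 0 = 0) (hφ' : deriv φ 0 ≠ 0) :
    Tendsto (fun u ↦ h (φ u) / φ u ^ k * deriv φ u ^ k * u ^ k) (𝓝[≠] 0) (𝓝 (h 0)) := by
  have hslope : Tendsto (fun u ↦ φ u / u) (𝓝[≠] 0) (𝓝 (deriv φ 0)) := by
    refine (hasDerivAt_iff_tendsto_slope.mp hφ.differentiableAt.hasDerivAt).congr fun u ↦ ?_
    rw [slope_def_field, hφ0, sub_zero, sub_zero]
  have hh_φ : Tendsto (fun u ↦ h (φ u)) (𝓝[≠] 0) (𝓝 (h 0)) :=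
    (hh.tendsto.comp (by simpa only [hφ0] using hφ.continuousAt.tendsto)).mono_left
      nhdsWithin_le_nhds
  have hderiv : Tendsto (deriv φ) (𝓝[≠] 0) (𝓝 (deriv φ 0)) :=
    hφ.deriv.continuousAt.tendsto.mono_left nhdsWithin_le_nhds
  have := hh_φ.mul (((hslope.inv₀ hφ').mul hderiv).pow k)
  rw [inv_mul_cancel₀ hφ', one_pow, mul_one] at this
  refine this.congr fun u ↦ ?_
  simp only [inv_div]
  ring

lemma residue_eq_of_pullback_eq {h φ : ℂ → ℂ} {k : ℕ} {r : ℂ} (hh : ContinuousAt h 0)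
    (hφ : AnalyticAt ℂ φ 0) (hφ0 : φ 0 = 0) (hφ' : deriv φ 0 ≠ 0)
    (hpull : ∀ᶠ u in 𝓝[≠] 0, h (φ u) / φ u ^ k * deriv φ u ^ k = r / u ^ k) :
    r = h 0 := by
  refine tendsto_nhds_unique (tendsto_const_nhds.congr' ?_)
    (tendsto_pullback_mul_pow k hh hφ hφ0 hφ')
  filter_upwards [hpull, self_mem_nhdsWithin] with u hu (hu0 : u ≠ 0)
  rw [hu, div_mul_cancel₀ _ (pow_ne_zero k hu0)]

/-- Standard coordinates at a pole of order exactly `k`: for a `k`-differential germ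
`ξ = w^{-k} h(w) (dw)^k` with `h` analytic and `h 0 = a₀ ≠ 0`, there is a germ of
biholomorphism `φ` fixing `0` and a nonzero `r ∈ ℂ` (the `k`-residue) with
`φ^* ξ = (r / z^k) (dz)^k`; moreover `r` is uniquely determined by `ξ`. -/
theorem stmt14 (k : ℕ) (hk : 1 ≤ k)
    (h : ℂ → ℂ) (hh : AnalyticAt ℂ h 0) (h0 : h 0 ≠ 0) :
    ∃ (φ : ℂ → ℂ) (r : ℂ), r ≠ 0 ∧ AnalyticAt ℂ φ 0 ∧ φ 0 = 0 ∧ deriv φ 0 ≠ 0 ∧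
      (∀ᶠ u in 𝓝[≠] (0 : ℂ), h (φ u) / (φ u) ^ k * (deriv φ u) ^ k = r / u ^ k) ∧
      ∀ (φ' : ℂ → ℂ) (r' : ℂ), AnalyticAt ℂ φ' 0 → φ' 0 = 0 → deriv φ' 0 ≠ 0 →
        (∀ᶠ u in 𝓝[≠] (0 : ℂ), h (φ' u) / (φ' u) ^ k * (deriv φ' u) ^ k = r' / u ^ k) →
        r' = r := by
  obtain ⟨ψ, hψ, hψ0, hψ', hpull⟩ := exists_pullback_normalForm_eq (k := k) (by omega) hh h0
  obtain ⟨φ, hφ, hφ0, hφ', hφpull⟩ := exists_localInverse_pullback_eq hψ hψ0 hψ' hpull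
  exact ⟨φ, h 0, h0, hφ, hφ0, hφ', hφpull, fun φ' r' ↦ residue_eq_of_pullback_eq hh.continuousAt⟩
end

section
/- Let k ≥ 1 and suppose a connected component Y of the upper-level subcurve has a normalized degree-k cyclic cover Ŷ → Y with deck transformation τ of order k and twisted abelian differential ω̂ satisfying τ*ω̂ = ζω̂ (ζ a primitive k-th root of unity), such that Ŷ has r < k connected components. Then r divides k, and for any connected component Ŷ₁ of Ŷ, the sum of residues of ω̂ at the down-pointing nodes of Ŷ₁ equals zero. (Proposition 5.1: the global residue condition imposed by Ŷ is automatically satisfied.) -/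
/-!
Transitivity makes the orbit of every component under `⟨σ⟩` the whole set of `r` components, so
every component has minimal period exactly `r` under `σ`. Hence `r ∣ k` because `σ ^ k = 1`, and
`τ ^ r` maps each component to itself. On a component it multiplies the residues by `ζ ^ r`,
which is not `1` because `0 < r < k`, so their sum `S` satisfies `ζ ^ r S = S` and vanishes.
-/

open Function MulAction

theorem Equiv.Perm.minimalPeriod_eq_card_of_forall_exists_pow_apply_eq {α : Type*} [Fintype α]
    (σ : Equiv.Perm α) (c : α) (h : ∀ c', ∃ i : ℕ, (σ ^ i) c = c') :
    minimalPeriod σ c = Fintype.card α := by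
  classical
  have horbit : ∀ c', c' ∈ orbit (Subgroup.zpowers σ) c := fun c' ↦ by
    obtain ⟨i, hi⟩ := h c'
    exact ⟨⟨σ ^ i, Subgroup.npow_mem_zpowers σ i⟩, hi⟩
  rw [← Fintype.card_congr (Equiv.subtypeUnivEquiv horbit)]
  exact minimalPeriod_eq_card (a := σ) (b := c)

theorem Finset.sum_eq_zero_of_apply_perm_eq_mul {Q R : Type*} [Ring R] [NoZeroDivisors R]
    (e : Equiv.Perm Q) (s : Finset Q) (hs : ∀ q, e q ∈ s ↔ q ∈ s) (f : Q → R) {a : R}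
    (ha : a ≠ 1) (hf : ∀ q, f (e q) = a * f q) : ∑ q ∈ s, f q = 0 := by
  have hfix : a * ∑ q ∈ s, f q = ∑ q ∈ s, f q := by
    rw [Finset.mul_sum]
    simp_rw [← hf]
    exact Finset.sum_equiv e (fun q ↦ (hs q).symm) (fun _ _ ↦ rfl)
  have : (a - 1) * ∑ q ∈ s, f q = 0 := by rw [sub_mul, hfix, one_mul, sub_self]
  exact (mul_eq_zero.mp this).resolve_left (sub_ne_zero.mpr ha)

theorem Function.Semiconj.apply_perm_pow {Q C : Type*} {f : Q → C} {τ : Equiv.Perm Q} {g : C → C}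
    (h : Semiconj f τ g) (n : ℕ) (q : Q) : f ((τ ^ n) q) = g^[n] (f q) := by
  rw [← Equiv.Perm.iterate_eq_pow]
  exact h.iterate_right n q

/-- `Q` is the set of down-pointing nodes of `Ŷ`, `C` its set of connected components, `comp` the
component containing a node, and `σ` the permutation of components induced by `τ`. -/
theorem stmt16_general (k : ℕ) (ζ : ℂ) (hζ : IsPrimitiveRoot ζ k)
    (Q : Type*) [Fintype Q] (C : Type*) [Fintype C] [Nonempty C] [DecidableEq C]
    (τ : Equiv.Perm Q)
    (σ : Equiv.Perm C) (hσ : σ ^ k = 1)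
    (comp : Q → C) (hcomp : ∀ q, comp (τ q) = σ (comp q))
    (htrans : ∀ c c' : C, ∃ i : ℕ, (σ ^ i) c = c')
    (r : ℕ) (hr : r = Fintype.card C) (hrk : r < k)
    (res : Q → ℂ) (hres : ∀ q, res (τ q) = ζ * res q) :
    r ∣ k ∧ ∀ c : C, ∑ q ∈ Finset.univ.filter (fun q => comp q = c), res q = 0 := by
  have hperiod (c : C) : minimalPeriod σ c = r :=
    hr ▸ σ.minimalPeriod_eq_card_of_forall_exists_pow_apply_eq c (htrans c)
  have hσr (c : C) : (σ ^ r) c = c := by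
    rw [← Equiv.Perm.iterate_eq_pow, ← hperiod c]
    exact iterate_minimalPeriod
  obtain ⟨c₀⟩ := ‹Nonempty C›
  have hσk : IsPeriodicPt σ k c₀ := by
    rw [IsPeriodicPt, IsFixedPt, Equiv.Perm.iterate_eq_pow, hσ, Equiv.Perm.one_apply]
  refine ⟨hperiod c₀ ▸ hσk.minimalPeriod_dvd, fun c ↦ ?_⟩
  have hζr : ζ ^ r ≠ 1 := hζ.pow_ne_one_of_pos_of_lt (hr ▸ Fintype.card_ne_zero) hrk
  refine Finset.sum_eq_zero_of_apply_perm_eq_mul (τ ^ r) _ (fun q ↦ ?_) res hζr fun q ↦ ?_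
  · simp only [Finset.mem_filter, Finset.mem_univ, true_and,
      Semiconj.apply_perm_pow hcomp, Equiv.Perm.iterate_eq_pow, hσr]
  · rw [Semiconj.apply_perm_pow hres, mul_left_iterate_apply]

/-- Proposition 5.1 (combinatorial form): `Q` is the set of lower-level nodes of the
normalized cover `Ŷ`, `τ` the order-`k` deck transformation, `res` the residues of `ω̂`
(so `res (τ q) = ζ res q` since `τ^* ω̂ = ζ ω̂`), `C` the set of connected components of `Ŷ`,
`σ` the induced permutation of components (transitive, since the deck group acts transitively).
If `Ŷ` has `r < k` components, then `r ∣ k` and on each component the residues of `ω̂` at its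
down-pointing nodes sum to zero: the global residue condition is automatic. -/
theorem stmt16 (k : ℕ) (hk : 1 ≤ k) (ζ : ℂ) (hζ : IsPrimitiveRoot ζ k)
    (Q : Type*) [Fintype Q] (C : Type*) [Fintype C] [Nonempty C] [DecidableEq C]
    (τ : Equiv.Perm Q) (hτ : τ ^ k = 1)
    (σ : Equiv.Perm C) (hσ : σ ^ k = 1)
    (comp : Q → C) (hcomp : ∀ q, comp (τ q) = σ (comp q))
    (htrans : ∀ c c' : C, ∃ i : ℕ, (σ ^ i) c = c')
    (r : ℕ) (hr : r = Fintype.card C) (hrk : r < k)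
    (res : Q → ℂ) (hres : ∀ q, res (τ q) = ζ * res q) :
    r ∣ k ∧ ∀ c : C, ∑ q ∈ Finset.univ.filter (fun q => comp q = c), res q = 0 :=
  stmt16_general k ζ hζ Q C τ σ hσ comp hcomp htrans r hr hrk res hres
end
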